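/- arXiv:1904.06919 — 5 statements merged into one kernel-verified Lean document; each statement's English description precedes it below -/
import Mathlib

section
/- (Ehrenfeucht–Fraïssé game for ELU.) For any finite vocabulary τ, any τ-structures 𝔄, 𝔅 with a ∈ dom(𝔄), b ∈ dom(𝔅), and any natural number ℓ: 𝔄,a ≤^ℓ_ELU 𝔅,b if and only if 𝔄,a ⪯^ℓ_sim 𝔅,b. Consequently, 𝔄,a ≤_ELU 𝔅,b if and only if 𝔄,a ⪯^ℓ_sim 𝔅,b for all ℓ. Moreover, if 𝔄 and 𝔅 are finite, then 𝔄,a ≤_ELU 𝔅,b if and only if 𝔄,a ⪯_sim 𝔅,b. -/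
/-- A τ-structure over domain `D`, for a vocabulary with concept names `Con`
(unary predicates) and role names `Rol` (binary predicates). -/
structure Str (Con Rol : Type) (D : Type) where
  conI : Con → Set D
  rolI : Rol → Set (D × D)

/-- ALC-concepts over the vocabulary `(Con, Rol)`. -/
inductive ALC (Con Rol : Type) where
  | top : ALC Con Rol
  | bot : ALC Con Rol
  | atomic : Con → ALC Con Rol
  | neg : ALC Con Rol → ALC Con Rol
  | disj : ALC Con Rol → ALC Con Rol → ALC Con Rol
  | conj : ALC Con Rol → ALC Con Rol → ALC Con Rol
  | impl : ALC Con Rol → ALC Con Rol → ALC Con Rol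
  | ex : Rol → ALC Con Rol → ALC Con Rol
  | all : Rol → ALC Con Rol → ALC Con Rol

variable {Con Rol D D1 D2 : Type}

/-- The extension `C^𝔄` of an ALC-concept in a structure. -/
def ALC.sem (M : Str Con Rol D) : ALC Con Rol → Set D
  | .top => Set.univ
  | .bot => ∅
  | .atomic A => M.conI A
  | .neg C => (C.sem M)ᶜ
  | .disj C C' => C.sem M ∪ C'.sem M
  | .conj C C' => C.sem M ∩ C'.sem M
  | .impl C C' => (C.sem M)ᶜ ∪ C'.sem M
  | .ex R C => {a | ∃ b, (a, b) ∈ M.rolI R ∧ b ∈ C.sem M}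
  | .all R C => {a | ∀ b, (a, b) ∈ M.rolI R → b ∈ C.sem M}

/-- The depth of an ALC-concept: maximal nesting of `∃R` and `∀R`. -/
def ALC.depth : ALC Con Rol → ℕ
  | .top | .bot | .atomic _ => 0
  | .neg C => C.depth
  | .disj C C' | .conj C C' | .impl C C' => max C.depth C'.depth
  | .ex _ C | .all _ C => C.depth + 1

/-- ELU-concepts: built from concept names and ⊤ using ⊓, ⊔ and ∃R only. -/
inductive ALC.IsELU : ALC Con Rol → Prop
  | top : IsELU .top
  | atomic (A : Con) : IsELU (.atomic A)
  | conj {C C' : ALC Con Rol} : IsELU C → IsELU C' → IsELU (.conj C C')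
  | disj {C C' : ALC Con Rol} : IsELU C → IsELU C' → IsELU (.disj C C')
  | ex (R : Rol) {C : ALC Con Rol} : IsELU C → IsELU (.ex R C)

/-- hornALC-concepts: `H ::= ⊥ | ⊤ | A | H⊓H' | L→H | ∃R.H | ∀R.H` with `L` an ELU-concept. -/
inductive ALC.IsHorn : ALC Con Rol → Prop
  | bot : IsHorn .bot
  | top : IsHorn .top
  | atomic (A : Con) : IsHorn (.atomic A)
  | conj {H H' : ALC Con Rol} : IsHorn H → IsHorn H' → IsHorn (.conj H H')
  | impl {L H : ALC Con Rol} : IsELU L → IsHorn H → IsHorn (.impl L H)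
  | ex (R : Rol) {H : ALC Con Rol} : IsHorn H → IsHorn (.ex R H)
  | all (R : Rol) {H : ALC Con Rol} : IsHorn H → IsHorn (.all R H)

/-- `S` is a simulation between `M` and `N`. -/
def IsSim (M : Str Con Rol D1) (N : Str Con Rol D2) (S : Set (D1 × D2)) : Prop :=
  ∀ a b, (a, b) ∈ S →
    (∀ A, a ∈ M.conI A → b ∈ N.conI A) ∧
    (∀ R a', (a, a') ∈ M.rolI R → ∃ b', (b, b') ∈ N.rolI R ∧ (a', b') ∈ S)

/-- `𝔄,a ⪯_sim 𝔅,b`: some simulation contains `(a,b)`. -/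
def Sim (M : Str Con Rol D1) (N : Str Con Rol D2) (a : D1) (b : D2) : Prop :=
  ∃ S, IsSim M N S ∧ (a, b) ∈ S

/-- The ℓ-round simulation relations `⪯^ℓ_sim`. -/
def SimL (M : Str Con Rol D1) (N : Str Con Rol D2) : ℕ → D1 → D2 → Prop
  | 0 => fun a b => ∀ A, a ∈ M.conI A → b ∈ N.conI A
  | ℓ + 1 => fun a b =>
      (∀ A, a ∈ M.conI A → b ∈ N.conI A) ∧
      ∀ R a', (a, a') ∈ M.rolI R → ∃ b', (b, b') ∈ N.rolI R ∧ SimL M N ℓ a' b'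

/-- `X R↑ Y`. -/
def relUp (R : Set (D1 × D1)) (X Y : Set D1) : Prop := ∀ a ∈ X, ∃ b ∈ Y, (a, b) ∈ R

/-- `X R↓ Y`. -/
def relDown (R : Set (D1 × D1)) (X Y : Set D1) : Prop := ∀ b ∈ Y, ∃ a ∈ X, (a, b) ∈ R

/-- `Z` is a Horn simulation between `M` and `N`. -/
def IsHornSim (M : Str Con Rol D1) (N : Str Con Rol D2) (Z : Set (Set D1 × D2)) : Prop :=
  ∀ X b, (X, b) ∈ Z →
    X.Nonempty ∧
    (∀ A, X ⊆ M.conI A → b ∈ N.conI A) ∧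
    (∀ R Y, relUp (M.rolI R) X Y →
        ∃ Y', Y' ⊆ Y ∧ ∃ b', (b, b') ∈ N.rolI R ∧ (Y', b') ∈ Z) ∧
    (∀ R b', (b, b') ∈ N.rolI R → ∃ Y, relDown (M.rolI R) X Y ∧ (Y, b') ∈ Z) ∧
    (∀ a ∈ X, Sim N M b a)

/-- `𝔄,X ⪯_horn 𝔅,b`: some Horn simulation contains `(X,b)`. -/
def HornSim (M : Str Con Rol D1) (N : Str Con Rol D2) (X : Set D1) (b : D2) : Prop :=
  ∃ Z, IsHornSim M N Z ∧ (X, b) ∈ Z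

/-- The ℓ-round Horn simulation relations `⪯^ℓ_horn`. -/
def HornSimL (M : Str Con Rol D1) (N : Str Con Rol D2) : ℕ → Set D1 → D2 → Prop
  | 0 => fun X b =>
      X.Nonempty ∧ (∀ A, X ⊆ M.conI A → b ∈ N.conI A) ∧ ∀ a ∈ X, SimL N M 0 b a
  | ℓ + 1 => fun X b =>
      (X.Nonempty ∧ (∀ A, X ⊆ M.conI A → b ∈ N.conI A) ∧ ∀ a ∈ X, SimL N M 0 b a) ∧
      (∀ R Y, relUp (M.rolI R) X Y →
          ∃ Y', Y' ⊆ Y ∧ ∃ b', (b, b') ∈ N.rolI R ∧ HornSimL M N ℓ Y' b') ∧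
      (∀ R b', (b, b') ∈ N.rolI R → ∃ Y, relDown (M.rolI R) X Y ∧ HornSimL M N ℓ Y b') ∧
      (∀ a ∈ X, SimL N M (ℓ + 1) b a)

/-- `𝔄,X ≤^ℓ_hornALC 𝔅,b`. -/
def leHornDepth (M : Str Con Rol D1) (N : Str Con Rol D2) (ℓ : ℕ) (X : Set D1) (b : D2) : Prop :=
  ∀ C : ALC Con Rol, C.IsHorn → C.depth ≤ ℓ → X ⊆ C.sem M → b ∈ C.sem N

/-- `𝔄,X ≤_hornALC 𝔅,b`. -/
def leHorn (M : Str Con Rol D1) (N : Str Con Rol D2) (X : Set D1) (b : D2) : Prop :=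
  ∀ C : ALC Con Rol, C.IsHorn → X ⊆ C.sem M → b ∈ C.sem N

/-- `𝔄,a ≤^ℓ_ELU 𝔅,b`. -/
def leELUDepth (M : Str Con Rol D1) (N : Str Con Rol D2) (ℓ : ℕ) (a : D1) (b : D2) : Prop :=
  ∀ C : ALC Con Rol, C.IsELU → C.depth ≤ ℓ → a ∈ C.sem M → b ∈ C.sem N

/-- `𝔄,a ≤_ELU 𝔅,b`. -/
def leELU (M : Str Con Rol D1) (N : Str Con Rol D2) (a : D1) (b : D2) : Prop :=
  ∀ C : ALC Con Rol, C.IsELU → a ∈ C.sem M → b ∈ C.sem N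

/-!
An ℓ-round simulation transfers ELU-concepts of depth at most ℓ, by induction on the concept.
Conversely, over a finite vocabulary there is a finite list `eluBasis ℓ` of ELU-concepts of
depth at most ℓ (the concept names, and `∃R.⨅S` for every role `R` and every sublist `S` of the
previous list) such that preserving just these concepts already yields `⪯^ℓ_sim`: for a
successor `a'` of `a`, take `S` to be the basis concepts true at `a'`.
If `𝔅` is finite, the successors of `b` are finitely many, so by pigeonhole one of them answers
`a'` in infinitely many, hence in all, of the games `⪯^ℓ_sim`; thus `⋂ ℓ, ⪯^ℓ_sim` is a simulation.
-/

variable {M : Str Con Rol D1} {N : Str Con Rol D2}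

namespace SimL

theorem atoms {ℓ : ℕ} {a : D1} {b : D2} (h : SimL M N ℓ a b) :
    ∀ A, a ∈ M.conI A → b ∈ N.conI A := by
  cases ℓ with
  | zero => exact h
  | succ ℓ => exact h.1

theorem of_succ : ∀ {ℓ : ℕ} {a : D1} {b : D2}, SimL M N (ℓ + 1) a b → SimL M N ℓ a b
  | 0, _, _, h => h.1
  | _ + 1, _, _, h => ⟨h.1, fun R a' ha' =>
      let ⟨b', hbb', hb'⟩ := h.2 R a' ha'
      ⟨b', hbb', of_succ hb'⟩⟩

theorem of_le {ℓ ℓ' : ℕ} (hle : ℓ ≤ ℓ') {a : D1} {b : D2} (h : SimL M N ℓ' a b) :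
    SimL M N ℓ a b := by
  induction hle with
  | refl => exact h
  | step _ ih => exact ih h.of_succ

theorem mem_sem {C : ALC Con Rol} (hC : C.IsELU) :
    ∀ {ℓ : ℕ} {a : D1} {b : D2}, SimL M N ℓ a b → C.depth ≤ ℓ → a ∈ C.sem M → b ∈ C.sem N := by
  induction hC with
  | top => exact fun _ _ _ => trivial
  | atomic A => exact fun h _ ha => h.atoms A ha
  | conj _ _ ih₁ ih₂ =>
    intro ℓ a b h hd ha
    rw [ALC.depth, max_le_iff] at hd
    exact ⟨ih₁ h hd.1 ha.1, ih₂ h hd.2 ha.2⟩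
  | disj _ _ ih₁ ih₂ =>
    intro ℓ a b h hd ha
    rw [ALC.depth, max_le_iff] at hd
    exact ha.imp (ih₁ h hd.1) (ih₂ h hd.2)
  | ex R _ ih =>
    intro ℓ a b h hd ha
    obtain ⟨a', haa', ha'⟩ := ha
    obtain _ | ℓ := ℓ
    · simp [ALC.depth] at hd
    · obtain ⟨b', hbb', hb'⟩ := h.2 R a' haa'
      exact ⟨b', hbb', ih hb' (Nat.le_of_succ_le_succ hd) ha'⟩

end SimL

theorem IsSim.simL {S : Set (D1 × D2)} (hS : IsSim M N S) :
    ∀ (ℓ : ℕ) {a : D1} {b : D2}, (a, b) ∈ S → SimL M N ℓ a b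
  | 0, _, _, hab => (hS _ _ hab).1
  | ℓ + 1, _, _, hab => ⟨(hS _ _ hab).1, fun R a' ha' =>
      let ⟨b', hbb', hb'⟩ := (hS _ _ hab).2 R a' ha'
      ⟨b', hbb', hS.simL ℓ hb'⟩⟩

theorem isSim_setOf_forall_simL [Finite D2] :
    IsSim M N {p | ∀ ℓ, SimL M N ℓ p.1 p.2} := by
  intro a b hab
  refine ⟨(hab 0).atoms, fun R a' haa' => ?_⟩
  choose f hbf hf using fun ℓ => (hab (ℓ + 1)).2 R a' haa'
  obtain ⟨b', hfib⟩ := Finite.exists_infinite_fiber f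
  have hinf : (f ⁻¹' {b'}).Infinite := Set.infinite_coe_iff.1 hfib
  obtain ⟨ℓ₀, hℓ₀, -⟩ := hinf.exists_gt 0
  refine ⟨b', hℓ₀ ▸ hbf ℓ₀, fun ℓ => ?_⟩
  obtain ⟨ℓ', hℓ', hlt⟩ := hinf.exists_gt ℓ
  exact (hℓ' ▸ hf ℓ').of_le hlt.le

theorem sim_iff_forall_simL [Finite D2] {a : D1} {b : D2} :
    Sim M N a b ↔ ∀ ℓ, SimL M N ℓ a b :=
  ⟨fun ⟨_, hS, hab⟩ ℓ => hS.simL ℓ hab, fun h => ⟨_, isSim_setOf_forall_simL, h⟩⟩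

namespace ALC

def conjList : List (ALC Con Rol) → ALC Con Rol :=
  List.foldr .conj .top

theorem mem_sem_conjList {x : D} {L : List (ALC Con Rol)} {M : Str Con Rol D} :
    x ∈ (conjList L).sem M ↔ ∀ C ∈ L, x ∈ C.sem M := by
  induction L with
  | nil => simp [conjList, sem]
  | cons C L ih => simp [conjList, sem, ← ih]

theorem isELU_conjList {L : List (ALC Con Rol)} (h : ∀ C ∈ L, C.IsELU) :
    (conjList L).IsELU := by
  induction L with
  | nil => exact .top
  | cons C L ih =>
    rw [List.forall_mem_cons] at h
    exact .conj h.1 (ih h.2)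

theorem depth_conjList_le {L : List (ALC Con Rol)} {n : ℕ} (h : ∀ C ∈ L, C.depth ≤ n) :
    (conjList L).depth ≤ n := by
  induction L with
  | nil => exact Nat.zero_le n
  | cons C L ih =>
    rw [List.forall_mem_cons] at h
    exact max_le h.1 (ih h.2)

end ALC

open ALC in
noncomputable def eluBasis (Con Rol : Type) [Fintype Con] [Fintype Rol] : ℕ → List (ALC Con Rol)
  | 0 => Finset.univ.toList.map atomic
  | ℓ + 1 => Finset.univ.toList.map atomic ++
      Finset.univ.toList.flatMap fun R => (eluBasis Con Rol ℓ).sublists.map (ex R ∘ conjList)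

section eluBasis

variable [Fintype Con] [Fintype Rol]

theorem mem_eluBasis_succ {ℓ : ℕ} {C : ALC Con Rol} :
    C ∈ eluBasis Con Rol (ℓ + 1) ↔
      (∃ A, C = .atomic A) ∨ ∃ R S, S.Sublist (eluBasis Con Rol ℓ) ∧ C = .ex R (.conjList S) := by
  simp [eluBasis, List.mem_flatMap, eq_comm]

theorem atomic_mem_eluBasis (ℓ : ℕ) (A : Con) : ALC.atomic (Rol := Rol) A ∈ eluBasis Con Rol ℓ := by
  cases ℓ <;> simp [eluBasis]

theorem isELU_and_depth_le_of_mem_eluBasis :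
    ∀ {ℓ : ℕ} {C : ALC Con Rol}, C ∈ eluBasis Con Rol ℓ → C.IsELU ∧ C.depth ≤ ℓ
  | 0, C, hC => by
    obtain ⟨A, -, rfl⟩ := List.mem_map.1 hC
    exact ⟨.atomic A, le_rfl⟩
  | ℓ + 1, C, hC => by
    obtain ⟨A, rfl⟩ | ⟨R, S, hS, rfl⟩ := mem_eluBasis_succ.1 hC
    · exact ⟨.atomic A, Nat.zero_le _⟩
    have hmem := fun D (hD : D ∈ S) => isELU_and_depth_le_of_mem_eluBasis (hS.subset hD)
    exact ⟨.ex R (ALC.isELU_conjList fun D hD => (hmem D hD).1),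
      Nat.succ_le_succ (ALC.depth_conjList_le fun D hD => (hmem D hD).2)⟩

theorem simL_of_forall_eluBasis :
    ∀ {ℓ : ℕ} {a : D1} {b : D2},
      (∀ C ∈ eluBasis Con Rol ℓ, a ∈ C.sem M → b ∈ C.sem N) → SimL M N ℓ a b
  | 0, _, _, h => fun A => h _ (atomic_mem_eluBasis 0 A)
  | ℓ + 1, a, b, h => by
    classical
    refine ⟨fun A => h _ (atomic_mem_eluBasis _ A), fun R a' haa' => ?_⟩
    set S := (eluBasis Con Rol ℓ).filter (a' ∈ ·.sem M)
    have hS : ∀ C ∈ S, C ∈ eluBasis Con Rol ℓ ∧ a' ∈ C.sem M := by simp [S]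
    have hb : b ∈ (ALC.ex R (.conjList S)).sem N :=
      h _ (mem_eluBasis_succ.2 (.inr ⟨R, S, List.filter_sublist, rfl⟩))
        ⟨a', haa', ALC.mem_sem_conjList.2 fun C hC => (hS C hC).2⟩
    obtain ⟨b', hbb', hb'⟩ := hb
    refine ⟨b', hbb', simL_of_forall_eluBasis fun C hC ha' => ?_⟩
    exact ALC.mem_sem_conjList.1 hb' C (List.mem_filter.2 ⟨hC, decide_eq_true ha'⟩)

theorem leELUDepth_iff_simL {ℓ : ℕ} {a : D1} {b : D2} :
    leELUDepth M N ℓ a b ↔ SimL M N ℓ a b :=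
  ⟨fun h => simL_of_forall_eluBasis fun C hC =>
      h C (isELU_and_depth_le_of_mem_eluBasis hC).1 (isELU_and_depth_le_of_mem_eluBasis hC).2,
    fun h _ hC hd => h.mem_sem hC hd⟩

end eluBasis

theorem leELU_iff_forall_leELUDepth {a : D1} {b : D2} :
    leELU M N a b ↔ ∀ ℓ, leELUDepth M N ℓ a b :=
  ⟨fun h _ C hC _ => h C hC, fun h C hC => h C.depth C hC le_rfl⟩

theorem elu_ef_game_general {Con Rol : Type} [Fintype Con] [Fintype Rol]
    {D1 D2 : Type}
    (M : Str Con Rol D1) (N : Str Con Rol D2) (a : D1) (b : D2) :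
    (∀ ℓ : ℕ, leELUDepth M N ℓ a b ↔ SimL M N ℓ a b) ∧
    (leELU M N a b ↔ ∀ ℓ : ℕ, SimL M N ℓ a b) ∧
    (Finite D1 → Finite D2 → (leELU M N a b ↔ Sim M N a b)) := by
  have hELU : leELU M N a b ↔ ∀ ℓ : ℕ, SimL M N ℓ a b := by
    simp only [leELU_iff_forall_leELUDepth, leELUDepth_iff_simL]
  exact ⟨fun _ => leELUDepth_iff_simL, hELU,
    fun _ _ => hELU.trans sim_iff_forall_simL.symm⟩

/-- **Ehrenfeucht–Fraïssé game for ELU.**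
For any finite vocabulary τ, pointed τ-structures `𝔄,a` and `𝔅,b`, and any `ℓ < ω`:
`𝔄,a ≤^ℓ_ELU 𝔅,b` iff `𝔄,a ⪯^ℓ_sim 𝔅,b`.  Thus `𝔄,a ≤_ELU 𝔅,b` iff
`𝔄,a ⪯^ℓ_sim 𝔅,b` for all `ℓ`.  If `𝔄` and `𝔅` are finite, then
`𝔄,a ≤_ELU 𝔅,b` iff `𝔄,a ⪯_sim 𝔅,b`. -/
theorem elu_ef_game {Con Rol : Type} [Fintype Con] [Fintype Rol]
    {D1 D2 : Type} [Nonempty D1] [Nonempty D2]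
    (M : Str Con Rol D1) (N : Str Con Rol D2) (a : D1) (b : D2) :
    (∀ ℓ : ℕ, leELUDepth M N ℓ a b ↔ SimL M N ℓ a b) ∧
    (leELU M N a b ↔ ∀ ℓ : ℕ, SimL M N ℓ a b) ∧
    (Finite D1 → Finite D2 → (leELU M N a b ↔ Sim M N a b)) :=
  elu_ef_game_general M N a b
end

section
/- (i) If Z is a bisimulation between τ-structures 𝔄 and 𝔅, then {({a},b) | (a,b)∈Z} is a Horn simulation between 𝔄 and 𝔅. (ii) Conversely, if Z is a Horn simulation between 𝔄 and 𝔅 such that X is a singleton for every (X,b)∈Z, then {(a,b) | ({a},b)∈Z} is a bisimulation between 𝔄 and 𝔅. -/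
variable {Con Rol D D1 D2 : Type}

/-- `S` is a bisimulation between `M` and `N`: `S` is a simulation and its converse is a
simulation in the other direction. -/
def IsBisim (M : Str Con Rol D1) (N : Str Con Rol D2) (S : Set (D1 × D2)) : Prop :=
  IsSim M N S ∧ IsSim N M {p : D2 × D1 | (p.2, p.1) ∈ S}

/-- (i) If `Z` is a bisimulation between τ-structures `𝔄` and `𝔅`, then
`{({a},b) | (a,b) ∈ Z}` is a Horn simulation between `𝔄` and `𝔅`.
(ii) Conversely, if `Z` is a Horn simulation with a singleton `X` in every `(X,b) ∈ Z`,
then `{(a,b) | ({a},b) ∈ Z}` is a bisimulation between `𝔄` and `𝔅`. -/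
theorem bisim_hornSim {Con Rol : Type} {D1 D2 : Type} [Nonempty D1] [Nonempty D2]
    (M : Str Con Rol D1) (N : Str Con Rol D2) :
    (∀ S : Set (D1 × D2), IsBisim M N S →
      IsHornSim M N {q : Set D1 × D2 | ∃ a b, (a, b) ∈ S ∧ q = ({a}, b)}) ∧
    (∀ Z : Set (Set D1 × D2), IsHornSim M N Z →
      (∀ X b, (X, b) ∈ Z → ∃ a : D1, X = {a}) →
      IsBisim M N {p : D1 × D2 | ({p.1}, p.2) ∈ Z}) := by
  constructor
  · rintro S ⟨hS, hS'⟩ X b ⟨a, b', hab, heq⟩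
    obtain ⟨rfl, rfl⟩ : X = {a} ∧ b = b' := Prod.mk.injEq .. ▸ heq
    refine ⟨⟨a, rfl⟩, ?_, ?_, ?_, ?_⟩
    · intro A hA
      exact ((hS a b hab).1 A (hA rfl))
    · intro R Y hup
      obtain ⟨y, hy, hay⟩ := hup a rfl
      obtain ⟨b2, hb2, hyb2⟩ := (hS a b hab).2 R y hay
      exact ⟨{y}, Set.singleton_subset_iff.2 hy, b2, hb2, y, b2, hyb2, rfl⟩
    · intro R b2 hb2
      obtain ⟨a2, ha2, ha2b2⟩ := (hS' b a hab).2 R b2 hb2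
      refine ⟨{a2}, ?_, a2, b2, ha2b2, rfl⟩
      intro y hy; exact ⟨a, rfl, hy ▸ ha2⟩
    · intro a0 ha0
      subst ha0
      exact ⟨{p : D2 × D1 | (p.2, p.1) ∈ S}, hS', hab⟩
  · rintro Z hZ hsing
    constructor
    · intro a b hab
      obtain ⟨_, hatom, hforth, _, _⟩ := hZ _ _ hab
      refine ⟨fun A hA => hatom A (Set.singleton_subset_iff.2 hA), ?_⟩
      intro R a' haa'
      obtain ⟨Y', hY', b', hbb', hY'b'⟩ := hforth R {a'}
        (fun x hx => ⟨a', rfl, hx ▸ haa'⟩)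
      obtain ⟨c, rfl⟩ := hsing _ _ hY'b'
      have : c = a' := hY' rfl
      subst this
      exact ⟨b', hbb', hY'b'⟩
    · intro b a hab
      obtain ⟨_, _, _, hback, hsim⟩ := hZ _ _ hab
      obtain ⟨S0, hS0, hbaS0⟩ := hsim a rfl
      refine ⟨fun A hA => (hS0 b a hbaS0).1 A hA, ?_⟩
      intro R b' hbb'
      obtain ⟨Y, hdown, hYb'⟩ := hback R b' hbb'
      obtain ⟨c, rfl⟩ := hsing _ _ hYb'
      obtain ⟨a0, ha0, ha0c⟩ := hdown c rfl
      have : a0 = a := ha0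
      subst this
      exact ⟨c, ha0c, hYb'⟩
end

section
/- Let (𝔄_i)_{i∈I} be a family of τ-structures, let 𝔄 be their disjoint union, and let ∏_{i∈I}𝔄_i be their product. Define Z to be the set of pairs (Y,f) such that Y ⊆ dom(𝔄), f ∈ dom(∏_{i∈I}𝔄_i), and for every i∈I the intersection of Y with the copy of dom(𝔄_i) in dom(𝔄) is exactly the singleton {f(i)}. Then Z is a Horn simulation between 𝔄 and ∏_{i∈I}𝔄_i. -/
variable {Con Rol D D1 D2 : Type}

/-- The disjoint union of a family of τ-structures. -/
def dUnion {I : Type} {D : I → Type} (A : ∀ i, Str Con Rol (D i)) :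
    Str Con Rol (Σ i, D i) where
  conI P := {x | x.2 ∈ (A x.1).conI P}
  rolI R := {p | ∃ (i : I) (a b : D i),
    p.1 = ⟨i, a⟩ ∧ p.2 = ⟨i, b⟩ ∧ (a, b) ∈ (A i).rolI R}

/-- The product of a family of τ-structures. -/
def dProd {I : Type} {D : I → Type} (A : ∀ i, Str Con Rol (D i)) :
    Str Con Rol (∀ i, D i) where
  conI P := {f | ∀ i, f i ∈ (A i).conI P}
  rolI R := {p | ∀ i, (p.1 i, p.2 i) ∈ (A i).rolI R}

/-- Let `(𝔄_i)_{i∈I}` be a family of τ-structures, `𝔄` their disjoint union and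
`∏_{i∈I}𝔄_i` their product.  The set `Z` of pairs `(Y,f)` such that, for every `i ∈ I`,
the intersection of `Y` with the copy of `dom(𝔄_i)` in `dom(𝔄)` is exactly `{f(i)}`,
is a Horn simulation between `𝔄` and `∏_{i∈I}𝔄_i`. -/
theorem product_hornSim {Con Rol : Type} {I : Type} [Nonempty I]
    {D : I → Type} [∀ i, Nonempty (D i)] (A : ∀ i, Str Con Rol (D i)) :
    IsHornSim (dUnion A) (dProd A)
      {q : Set (Σ i, D i) × (∀ i, D i) |
        ∀ i : I, {a : D i | (⟨i, a⟩ : Σ j, D j) ∈ q.1} = {q.2 i}} := by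
  intro X b hXb
  simp only [Set.mem_setOf_eq] at hXb
  have hb : ∀ i, (⟨i, b i⟩ : Σ j, D j) ∈ X := fun i =>
    (Set.ext_iff.mp (hXb i) (b i)).mpr rfl
  have hmem : ∀ i (a : D i), (⟨i, a⟩ : Σ j, D j) ∈ X → a = b i := fun i a ha =>
    (Set.ext_iff.mp (hXb i) a).mp ha
  refine ⟨⟨⟨Classical.arbitrary I, b _⟩, hb _⟩, ?_, ?_, ?_, ?_⟩
  · -- atoms
    intro A' hA' i
    exact hA' (hb i)
  · -- forth
    intro R Y hup
    have hc : ∀ i, ∃ c : D i, (⟨i, c⟩ : Σ j, D j) ∈ Y ∧ (b i, c) ∈ (A i).rolI R := by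
      intro i
      obtain ⟨y, hyY, hedge⟩ := hup ⟨i, b i⟩ (hb i)
      obtain ⟨j, a₁, a₂, h1, h2, h3⟩ := hedge
      obtain ⟨rfl, h⟩ := Sigma.mk.inj_iff.mp h1
      cases eq_of_heq h
      exact ⟨a₂, h2 ▸ hyY, h3⟩
    choose c hcY hcR using hc
    refine ⟨Set.range (fun i => (⟨i, c i⟩ : Σ j, D j)), ?_, c, hcR, ?_⟩
    · rintro _ ⟨i, rfl⟩; exact hcY i
    · intro i
      ext a
      simp only [Set.mem_setOf_eq, Set.mem_range, Set.mem_singleton_iff]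
      constructor
      · rintro ⟨j, hj⟩
        obtain ⟨rfl, h⟩ := Sigma.mk.inj_iff.mp hj.symm
        exact eq_of_heq h
      · rintro rfl; exact ⟨i, rfl⟩
  · -- back
    intro R b' hR
    refine ⟨Set.range (fun i => (⟨i, b' i⟩ : Σ j, D j)), ?_, ?_⟩
    · rintro _ ⟨i, rfl⟩
      exact ⟨⟨i, b i⟩, hb i, ⟨i, b i, b' i, rfl, rfl, hR i⟩⟩
    · intro i
      ext a
      simp only [Set.mem_setOf_eq, Set.mem_range, Set.mem_singleton_iff]
      constructor
      · rintro ⟨j, hj⟩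
        obtain ⟨rfl, h⟩ := Sigma.mk.inj_iff.mp hj.symm
        exact eq_of_heq h
      · rintro rfl; exact ⟨i, rfl⟩
  · -- sim
    rintro ⟨i, a⟩ ha
    have : a = b i := hmem i a ha
    subst this
    refine ⟨{p : (∀ j, D j) × (Σ j, D j) | p.2.2 = p.1 p.2.1}, ?_, rfl⟩
    rintro f ⟨j, x⟩ hfx
    simp only [Set.mem_setOf_eq] at hfx
    subst hfx
    constructor
    · intro A' hfA'
      exact hfA' j
    · intro R g hRg
      exact ⟨⟨j, g j⟩, ⟨j, f j, g j, rfl, rfl, hRg j⟩, rfl⟩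
end

section
/- (TBox-level Ehrenfeucht–Fraïssé characterization for hornALC.) For any finite vocabulary τ, any τ-structures 𝔄 and 𝔅, and any natural number ℓ: 𝔄 ≤^ℓ_hornALC 𝔅 if and only if 𝔄 ⪯^ℓ_horn 𝔅. Moreover, if 𝔄 and 𝔅 are finite, then 𝔄 ≤_hornALC 𝔅 if and only if 𝔄 ⪯_horn 𝔅. -/
variable {Con Rol D D1 D2 : Type}

/-- `𝔄 ≤^ℓ_hornALC 𝔅`: every hornALC-CI `L ⊑ H` of depth ≤ ℓ that holds in `𝔄` holds in `𝔅`. -/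
def leHornCIDepth (M : Str Con Rol D1) (N : Str Con Rol D2) (ℓ : ℕ) : Prop :=
  ∀ L H : ALC Con Rol, L.IsELU → H.IsHorn → L.depth ≤ ℓ → H.depth ≤ ℓ →
    L.sem M ⊆ H.sem M → L.sem N ⊆ H.sem N

/-- `𝔄 ≤_hornALC 𝔅`: every hornALC-CI that holds in `𝔄` holds in `𝔅`. -/
def leHornCI (M : Str Con Rol D1) (N : Str Con Rol D2) : Prop :=
  ∀ L H : ALC Con Rol, L.IsELU → H.IsHorn → L.sem M ⊆ H.sem M → L.sem N ⊆ H.sem N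

/-- `𝔄 ⪯^ℓ_horn 𝔅`: for every `b ∈ dom(𝔅)` there is `X ⊆ dom(𝔄)` with `𝔄,X ⪯^ℓ_horn 𝔅,b`. -/
def globalHornSimL (M : Str Con Rol D1) (N : Str Con Rol D2) (ℓ : ℕ) : Prop :=
  ∀ b : D2, ∃ X : Set D1, HornSimL M N ℓ X b

/-- `𝔄 ⪯_horn 𝔅`: for every `b ∈ dom(𝔅)` there is `X ⊆ dom(𝔄)` with `𝔄,X ⪯_horn 𝔅,b`. -/
def globalHornSim (M : Str Con Rol D1) (N : Str Con Rol D2) : Prop :=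
  ∀ b : D2, ∃ X : Set D1, HornSim M N X b

/-! Soundness is an induction on hornALC-concepts: the premise `L` of `L → H` is an ELU concept,
so it passes from `b` to every `a ∈ X` along the simulations `b ⪯_sim a`, while (forth) and
(back) take care of `∃R` and `∀R`.

For completeness take `X = {a | b ⪯^ℓ_sim a}`. Over a finite vocabulary there are only finitely
many depth-`ℓ` types, each with a characteristic ELU concept `χ_t`, and every element of `χ_b`
(for the type of `b`) lies in `X`; so the CI `χ_b ⊑ H` carries every depth-`ℓ` Horn consequence
of `X` over to `b`. Sharing Horn consequences is in turn an `ℓ`-round Horn simulation: a failing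
forth move would be refuted by `∃R.⨅_t (χ_t → H_t)`, one conjunct for each type `t` of an
`R`-successor of `b`, and a failing back move by `∀R.(χ_{b'} → H)`.

For finite structures a pigeonhole argument glues the round-bounded relations together, so that
`⪯_horn` is the intersection of the `⪯^ℓ_horn`. -/

section Simulations

variable {M : Str Con Rol D1} {N : Str Con Rol D2} {k : ℕ} {a : D1} {b : D2}

theorem SimL.atom (h : SimL M N k a b) (A : Con) (ha : a ∈ M.conI A) : b ∈ N.conI A := by
  cases k with
  | zero => exact h A ha
  | succ k => exact h.1 A ha

theorem SimL.of_succ_s5 : ∀ {k : ℕ} {a : D1} {b : D2}, SimL M N (k + 1) a b → SimL M N k a b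
  | 0, _, _, h => h.1
  | _ + 1, _, _, h => ⟨h.1, fun R a' hr =>
      let ⟨b', hb', h'⟩ := h.2 R a' hr
      ⟨b', hb', h'.of_succ_s5⟩⟩

theorem Sim.simL (h : Sim M N a b) : ∀ k, SimL M N k a b := by
  obtain ⟨S, hS, hab⟩ := h
  intro k
  induction k generalizing a b with
  | zero => exact (hS a b hab).1
  | succ k ih =>
    refine ⟨(hS a b hab).1, fun R a' hr => ?_⟩
    obtain ⟨b', hb', hS'⟩ := (hS a b hab).2 R a' hr
    exact ⟨b', hb', ih hS'⟩

end Simulations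

theorem exists_forall_of_succ_imp {α : Type} [Finite α] {P : ℕ → α → Prop}
    (hP : ∀ k x, P (k + 1) x → P k x) (h : ∀ k, ∃ x, P k x) : ∃ x, ∀ k, P k x := by
  choose f hf using h
  obtain ⟨x, hx⟩ := Finite.exists_infinite_fiber f
  refine ⟨x, fun k => ?_⟩
  obtain ⟨j, hj, hkj⟩ := (Set.infinite_coe_iff.1 hx).exists_gt k
  exact antitone_nat_of_succ_le (f := (P · x)) (hP · x) hkj.le (hj ▸ hf j)

theorem sim_of_forall_simL [Finite D2] {M : Str Con Rol D1} {N : Str Con Rol D2} {a : D1}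
    {b : D2} (h : ∀ k, SimL M N k a b) : Sim M N a b := by
  refine ⟨{p | ∀ k, SimL M N k p.1 p.2}, fun a b hab => ⟨hab 0, fun R a' hr => ?_⟩, h⟩
  obtain ⟨b', hb'⟩ := exists_forall_of_succ_imp
    (P := fun k b' => (b, b') ∈ N.rolI R ∧ SimL M N k a' b')
    (fun _ _ h => ⟨h.1, h.2.of_succ_s5⟩) (fun k => (hab (k + 1)).2 R a' hr)
  exact ⟨b', (hb' 0).1, fun k => (hb' k).2⟩

section ELU

variable {M : Str Con Rol D1} {N : Str Con Rol D2}

theorem ALC.IsELU.mem_sem_of_simL {C : ALC Con Rol} (hC : C.IsELU) {k : ℕ} {a : D1} {b : D2}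
    (hs : SimL M N k a b) (hd : C.depth ≤ k) (ha : a ∈ C.sem M) : b ∈ C.sem N := by
  induction hC generalizing k a b with
  | top => trivial
  | atomic A => exact hs.atom A ha
  | conj _ _ ih ih' =>
    rw [ALC.depth, max_le_iff] at hd
    exact ⟨ih hs hd.1 ha.1, ih' hs hd.2 ha.2⟩
  | disj _ _ ih ih' =>
    rw [ALC.depth, max_le_iff] at hd
    exact ha.imp (ih hs hd.1) (ih' hs hd.2)
  | ex R _ ih =>
    cases k with
    | zero => simp [ALC.depth] at hd
    | succ k =>
      obtain ⟨a', hr, ha'⟩ := ha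
      obtain ⟨b', hb', hs'⟩ := hs.2 R a' hr
      exact ⟨b', hb', ih hs' (by simpa [ALC.depth] using hd) ha'⟩

end ELU

namespace ALC

def listConj (l : List (ALC Con Rol)) : ALC Con Rol :=
  l.foldr .conj .top

theorem mem_sem_listConj (M : Str Con Rol D) (l : List (ALC Con Rol)) (x : D) :
    x ∈ (listConj l).sem M ↔ ∀ C ∈ l, x ∈ C.sem M := by
  induction l with
  | nil => simp [listConj, sem]
  | cons C l ih => simp [listConj, sem, ← ih]

theorem listConj_induction {P : ALC Con Rol → Prop} (htop : P .top)
    (hconj : ∀ C C', P C → P C' → P (.conj C C')) {l : List (ALC Con Rol)}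
    (h : ∀ C ∈ l, P C) : P (listConj l) := by
  induction l with
  | nil => exact htop
  | cons C l ih => exact hconj _ _ (h C (by simp)) (ih fun C' hC' => h C' (by simp [hC']))

noncomputable def iConj {ι : Type} [Finite ι] (f : ι → ALC Con Rol) : ALC Con Rol :=
  letI := Fintype.ofFinite ι
  listConj (Finset.univ.toList.map f)

theorem mem_sem_iConj {ι : Type} [Finite ι] (M : Str Con Rol D) (f : ι → ALC Con Rol) (x : D) :
    x ∈ (iConj f).sem M ↔ ∀ i, x ∈ (f i).sem M := by
  simp [iConj, mem_sem_listConj]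

theorem iConj_induction {ι : Type} [Finite ι] {P : ALC Con Rol → Prop} (htop : P .top)
    (hconj : ∀ C C', P C → P C' → P (.conj C C')) {f : ι → ALC Con Rol} (h : ∀ i, P (f i)) :
    P (iConj f) :=
  listConj_induction htop hconj (by simpa using h)

theorem IsELU.iConj {ι : Type} [Finite ι] {f : ι → ALC Con Rol} (h : ∀ i, (f i).IsELU) :
    (iConj f).IsELU :=
  iConj_induction .top (fun _ _ => .conj) h

theorem IsHorn.iConj {ι : Type} [Finite ι] {f : ι → ALC Con Rol} (h : ∀ i, (f i).IsHorn) :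
    (iConj f).IsHorn :=
  iConj_induction .top (fun _ _ => .conj) h

theorem depth_iConj_le {ι : Type} [Finite ι] {f : ι → ALC Con Rol} {k : ℕ}
    (h : ∀ i, (f i).depth ≤ k) : (iConj f).depth ≤ k :=
  iConj_induction (P := (·.depth ≤ k)) (Nat.zero_le _) (fun _ _ => max_le) h

end ALC

/-- Depth-`k` types: the concept names an element satisfies and, for `k > 0`, the depth-`(k-1)`
types of its `R`-successors for every role name `R`. -/
def DepthType (Con Rol : Type) : ℕ → Type
  | 0 => Con → Prop
  | k + 1 => (Con → Prop) × (Rol → Set (DepthType Con Rol k))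

instance DepthType.finite [Finite Con] [Finite Rol] : ∀ k, Finite (DepthType Con Rol k)
  | 0 => inferInstanceAs (Finite (Con → Prop))
  | k + 1 =>
    have := DepthType.finite k
    inferInstanceAs (Finite ((Con → Prop) × (Rol → Set (DepthType Con Rol k))))

def Str.depthType (M : Str Con Rol D) : (k : ℕ) → D → DepthType Con Rol k
  | 0, a => (a ∈ M.conI ·)
  | k + 1, a => ((a ∈ M.conI ·), fun R => M.depthType k '' {a' | (a, a') ∈ M.rolI R})

section DepthType

variable {M : Str Con Rol D1} {N : Str Con Rol D2}

theorem Str.mem_conI_iff_of_depthType_eq {k : ℕ} {a : D1} {b : D2}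
    (h : M.depthType k a = N.depthType k b) (A : Con) : a ∈ M.conI A ↔ b ∈ N.conI A := by
  cases k with
  | zero => exact iff_of_eq (congrFun h A)
  | succ k => exact iff_of_eq (congrFun (congrArg Prod.fst h) A)

theorem Str.exists_rolI_of_depthType_succ_eq {k : ℕ} {a : D1} {b : D2}
    (h : M.depthType (k + 1) a = N.depthType (k + 1) b) {R : Rol} {a' : D1}
    (hr : (a, a') ∈ M.rolI R) : ∃ b', (b, b') ∈ N.rolI R ∧ M.depthType k a' = N.depthType k b' := by
  have hmem : M.depthType k a' ∈ (N.depthType (k + 1) b).2 R := h ▸ ⟨a', hr, rfl⟩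
  obtain ⟨b', hb', heq⟩ := hmem
  exact ⟨b', hb', heq.symm⟩

theorem ALC.mem_sem_iff_of_depthType_eq (C : ALC Con Rol) {k : ℕ} (hd : C.depth ≤ k) {a : D1}
    {b : D2} (h : M.depthType k a = N.depthType k b) : a ∈ C.sem M ↔ b ∈ C.sem N := by
  induction C generalizing k a b with
  | top | bot => exact Iff.rfl
  | atomic A => exact Str.mem_conI_iff_of_depthType_eq h A
  | neg C ih => exact not_congr (ih hd h)
  | disj C C' ih ih' =>
    rw [depth, max_le_iff] at hd
    exact or_congr (ih hd.1 h) (ih' hd.2 h)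
  | conj C C' ih ih' =>
    rw [depth, max_le_iff] at hd
    exact and_congr (ih hd.1 h) (ih' hd.2 h)
  | impl C C' ih ih' =>
    rw [depth, max_le_iff] at hd
    exact or_congr (not_congr (ih hd.1 h)) (ih' hd.2 h)
  | ex R C ih =>
    cases k with
    | zero => simp [depth] at hd
    | succ k =>
      have hd : C.depth ≤ k := by simpa [depth] using hd
      constructor
      · rintro ⟨a', hr, ha'⟩
        obtain ⟨b', hb', h'⟩ := Str.exists_rolI_of_depthType_succ_eq h hr
        exact ⟨b', hb', (ih hd h').1 ha'⟩
      · rintro ⟨b', hr, hb'⟩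
        obtain ⟨a', ha', h'⟩ := Str.exists_rolI_of_depthType_succ_eq h.symm hr
        exact ⟨a', ha', (ih hd h'.symm).2 hb'⟩
  | all R C ih =>
    cases k with
    | zero => simp [depth] at hd
    | succ k =>
      have hd : C.depth ≤ k := by simpa [depth] using hd
      constructor
      · intro ha b' hr
        obtain ⟨a', ha', h'⟩ := Str.exists_rolI_of_depthType_succ_eq h.symm hr
        exact (ih hd h'.symm).1 (ha a' ha')
      · intro hb a' hr
        obtain ⟨b', hb', h'⟩ := Str.exists_rolI_of_depthType_succ_eq h hr
        exact (ih hd h').2 (hb b' hb')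

end DepthType

section Characteristic

variable [Finite Con]

noncomputable def atomConj (t : Con → Prop) : ALC Con Rol :=
  ALC.iConj fun A : {A // t A} => .atomic A

theorem mem_sem_atomConj (M : Str Con Rol D) (t : Con → Prop) (x : D) :
    x ∈ (atomConj t : ALC Con Rol).sem M ↔ ∀ A, t A → x ∈ M.conI A := by
  simp [atomConj, ALC.mem_sem_iConj, ALC.sem]

theorem isELU_atomConj (t : Con → Prop) : (atomConj t : ALC Con Rol).IsELU :=
  .iConj fun A => .atomic A.1

theorem depth_atomConj (t : Con → Prop) : (atomConj t : ALC Con Rol).depth = 0 :=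
  Nat.le_zero.1 (ALC.depth_iConj_le fun _ => le_rfl)

variable [Finite Rol]

noncomputable def DepthType.charConcept : {k : ℕ} → DepthType Con Rol k → ALC Con Rol
  | 0, t => atomConj t
  | _ + 1, t => .conj (atomConj t.1) (ALC.iConj fun p : Σ R, t.2 R => .ex p.1 p.2.1.charConcept)

theorem DepthType.isELU_charConcept : ∀ {k : ℕ} (t : DepthType Con Rol k), t.charConcept.IsELU
  | 0, t => isELU_atomConj t
  | _ + 1, t => .conj (isELU_atomConj t.1) (.iConj fun p => .ex p.1 (isELU_charConcept p.2.1))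

theorem DepthType.depth_charConcept_le :
    ∀ {k : ℕ} (t : DepthType Con Rol k), t.charConcept.depth ≤ k
  | 0, t => (depth_atomConj t).le
  | _ + 1, t => max_le ((depth_atomConj t.1).trans_le (Nat.zero_le _))
      (ALC.depth_iConj_le fun p => Nat.succ_le_succ (depth_charConcept_le p.2.1))

theorem Str.mem_sem_charConcept_depthType (N : Str Con Rol D) :
    ∀ (k : ℕ) (b : D), b ∈ (N.depthType k b).charConcept.sem N
  | 0, b => (mem_sem_atomConj N _ b).2 fun _ h => h
  | k + 1, b => ⟨(mem_sem_atomConj N _ b).2 fun _ h => h, (ALC.mem_sem_iConj N _ b).2 <| by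
      rintro ⟨R, _, b', hb', rfl⟩
      exact ⟨b', hb', N.mem_sem_charConcept_depthType k b'⟩⟩

theorem simL_of_mem_sem_charConcept_depthType {M : Str Con Rol D1} {N : Str Con Rol D2} :
    ∀ {k : ℕ} {b : D2} {a : D1}, a ∈ (N.depthType k b).charConcept.sem M → SimL N M k b a
  | 0, b, a, h => (mem_sem_atomConj M _ a).1 h
  | k + 1, b, a, h => ⟨(mem_sem_atomConj M _ a).1 h.1, fun R b' hb' => by
      obtain ⟨a', ha', h'⟩ := (ALC.mem_sem_iConj M _ a).1 h.2 ⟨R, _, b', hb', rfl⟩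
      exact ⟨a', ha', simL_of_mem_sem_charConcept_depthType h'⟩⟩

end Characteristic

section HornSimulations

variable {M : Str Con Rol D1} {N : Str Con Rol D2} {k : ℕ} {X : Set D1} {b : D2}

theorem HornSimL.nonempty (h : HornSimL M N k X b) : X.Nonempty := by
  cases k with
  | zero => exact h.1
  | succ k => exact h.1.1

theorem HornSimL.atom (h : HornSimL M N k X b) (A : Con) (hX : X ⊆ M.conI A) : b ∈ N.conI A := by
  cases k with
  | zero => exact h.2.1 A hX
  | succ k => exact h.1.2.1 A hX

theorem HornSimL.simL (h : HornSimL M N k X b) : ∀ a ∈ X, SimL N M k b a := by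
  cases k with
  | zero => exact h.2.2
  | succ k => exact h.2.2.2

theorem HornSimL.of_succ_s5 : ∀ {k : ℕ} {X : Set D1} {b : D2},
    HornSimL M N (k + 1) X b → HornSimL M N k X b
  | 0, _, _, h => h.1
  | _ + 1, _, _, h => ⟨h.1,
      fun R Y hup =>
        let ⟨Y', hY', b', hb', h'⟩ := h.2.1 R Y hup
        ⟨Y', hY', b', hb', h'.of_succ_s5⟩,
      fun R b' hb' =>
        let ⟨Y, hY, h'⟩ := h.2.2.1 R b' hb'
        ⟨Y, hY, h'.of_succ_s5⟩,
      fun a ha => (h.2.2.2 a ha).of_succ_s5⟩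

theorem ALC.IsHorn.mem_sem_of_hornSimL {H : ALC Con Rol} (hH : H.IsHorn)
    (hs : HornSimL M N k X b) (hd : H.depth ≤ k) (hX : X ⊆ H.sem M) : b ∈ H.sem N := by
  induction hH generalizing k X b with
  | bot =>
    obtain ⟨a, ha⟩ := hs.nonempty
    exact hX ha
  | top => trivial
  | atomic A => exact hs.atom A hX
  | conj _ _ ih ih' =>
    rw [depth, max_le_iff] at hd
    exact ⟨ih hs hd.1 fun a ha => (hX ha).1, ih' hs hd.2 fun a ha => (hX ha).2⟩
  | @impl L _ hL _ ih =>
    rw [depth, max_le_iff] at hd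
    by_cases hbL : b ∈ L.sem N
    · refine Or.inr (ih hs hd.2 fun a ha => (hX ha).resolve_left fun haL => haL ?_)
      exact hL.mem_sem_of_simL (hs.simL a ha) hd.1 hbL
    · exact Or.inl hbL
  | ex R _ ih =>
    cases k with
    | zero => simp [depth] at hd
    | succ k =>
      obtain ⟨Y', hY', b', hb', hs'⟩ := hs.2.1 R _ fun a ha =>
        let ⟨y, hr, hy⟩ := hX ha
        ⟨y, hy, hr⟩
      exact ⟨b', hb', ih hs' (by simpa [depth] using hd) hY'⟩
  | all R _ ih =>
    cases k with
    | zero => simp [depth] at hd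
    | succ k =>
      intro b' hb'
      obtain ⟨Y, hdown, hs'⟩ := hs.2.2.1 R b' hb'
      refine ih hs' (by simpa [depth] using hd) fun y hy => ?_
      obtain ⟨a, ha, hr⟩ := hdown y hy
      exact hX ha y hr

theorem IsHornSim.hornSimL {Z : Set (Set D1 × D2)} (hZ : IsHornSim M N Z) (hXb : (X, b) ∈ Z) :
    ∀ k, HornSimL M N k X b := by
  intro k
  induction k generalizing X b with
  | zero =>
    obtain ⟨hne, hatom, -, -, hsim⟩ := hZ X b hXb
    exact ⟨hne, hatom, fun a ha => (hsim a ha).simL 0⟩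
  | succ k ih =>
    obtain ⟨hne, hatom, hforth, hback, hsim⟩ := hZ X b hXb
    refine ⟨⟨hne, hatom, fun a ha => (hsim a ha).simL 0⟩, fun R Y hup => ?_, fun R b' hb' => ?_,
      fun a ha => (hsim a ha).simL _⟩
    · obtain ⟨Y', hY', b', hb', hZ'⟩ := hforth R Y hup
      exact ⟨Y', hY', b', hb', ih hZ'⟩
    · obtain ⟨Y, hY, hZ'⟩ := hback R b' hb'
      exact ⟨Y, hY, ih hZ'⟩

theorem isHornSim_setOf_forall_hornSimL [Finite D1] [Finite D2] :
    IsHornSim M N {p | ∀ k, HornSimL M N k p.1 p.2} := by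
  intro X b hXb
  refine ⟨(hXb 0).nonempty, (hXb 0).atom, fun R Y hup => ?_, fun R b' hb' => ?_,
    fun a ha => sim_of_forall_simL fun k => (hXb k).simL a ha⟩
  · obtain ⟨⟨Y', b'⟩, h⟩ := exists_forall_of_succ_imp
      (P := fun k (q : Set D1 × D2) => q.1 ⊆ Y ∧ (b, q.2) ∈ N.rolI R ∧ HornSimL M N k q.1 q.2)
      (fun _ _ h => ⟨h.1, h.2.1, h.2.2.of_succ_s5⟩) fun k =>
        let ⟨Y', hY', b', hb', h'⟩ := (hXb (k + 1)).2.1 R Y hup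
        ⟨(Y', b'), hY', hb', h'⟩
    exact ⟨Y', (h 0).1, b', (h 0).2.1, fun k => (h k).2.2⟩
  · obtain ⟨Y, h⟩ := exists_forall_of_succ_imp
      (P := fun k Y => relDown (M.rolI R) X Y ∧ HornSimL M N k Y b')
      (fun _ _ h => ⟨h.1, h.2.of_succ_s5⟩) fun k => (hXb (k + 1)).2.2.1 R b' hb'
    exact ⟨Y, (h 0).1, fun k => (h k).2⟩

theorem globalHornSim_iff_forall_globalHornSimL [Finite D1] [Finite D2] :
    globalHornSim M N ↔ ∀ ℓ, globalHornSimL M N ℓ := by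
  refine ⟨fun h ℓ b => ?_, fun h b => ?_⟩
  · obtain ⟨X, Z, hZ, hXb⟩ := h b
    exact ⟨X, hZ.hornSimL hXb ℓ⟩
  · obtain ⟨X, hX⟩ := exists_forall_of_succ_imp (P := fun k X => HornSimL M N k X b)
      (fun _ _ => HornSimL.of_succ_s5) (h · b)
    exact ⟨X, _, isHornSim_setOf_forall_hornSimL, hX⟩

theorem leHornCIDepth_of_globalHornSimL {ℓ : ℕ} (h : globalHornSimL M N ℓ) :
    leHornCIDepth M N ℓ := by
  intro L H hL hH hdL hdH hLH b hb
  obtain ⟨X, hX⟩ := h b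
  exact hH.mem_sem_of_hornSimL hX hdH fun a ha => hLH (hL.mem_sem_of_simL (hX.simL a ha) hdL hb)

end HornSimulations

theorem leHornCI_iff_forall_leHornCIDepth {M : Str Con Rol D1} {N : Str Con Rol D2} :
    leHornCI M N ↔ ∀ ℓ, leHornCIDepth M N ℓ :=
  ⟨fun h _ L H hL hH _ _ => h L H hL hH, fun h L H hL hH =>
    h (max L.depth H.depth) L H hL hH (le_max_left _ _) (le_max_right _ _)⟩

section Completeness

variable {M : Str Con Rol D1} {N : Str Con Rol D2} {k : ℕ} {X : Set D1} {b : D2}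

theorem leHornDepth.nonempty (h : leHornDepth M N k X b) : X.Nonempty := by
  rw [Set.nonempty_iff_ne_empty]
  rintro rfl
  exact h .bot .bot (Nat.zero_le _) (Set.empty_subset _)

variable [Finite Con] [Finite Rol]

theorem leHornDepth.forth (h : leHornDepth M N (k + 1) X b) {R : Rol} {Y : Set D1}
    (hup : relUp (M.rolI R) X Y) :
    ∃ b', (b, b') ∈ N.rolI R ∧ leHornDepth M N k {y ∈ Y | SimL N M k b' y} b' := by
  by_contra! hno
  have hsep : ∀ t : {t : DepthType Con Rol k // ∃ b', (b, b') ∈ N.rolI R ∧ N.depthType k b' = t},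
      ∃ H : ALC Con Rol, H.IsHorn ∧ H.depth ≤ k ∧
        (∀ y ∈ Y, y ∈ t.1.charConcept.sem M → y ∈ H.sem M) ∧
        ∀ b', N.depthType k b' = t.1 → b' ∉ H.sem N := by
    rintro ⟨_, b', hb', rfl⟩
    obtain ⟨H, hH, hd, hsub, hnot⟩ : ∃ H : ALC Con Rol, H.IsHorn ∧ H.depth ≤ k ∧
        {y ∈ Y | SimL N M k b' y} ⊆ H.sem M ∧ b' ∉ H.sem N := by
      simpa [leHornDepth] using hno b' hb'
    exact ⟨H, hH, hd, fun y hy hχ => hsub ⟨hy, simL_of_mem_sem_charConcept_depthType hχ⟩,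
      fun b'' heq hb'' => hnot ((H.mem_sem_iff_of_depthType_eq hd heq).1 hb'')⟩
  choose H hH hd hsubY hnot using hsep
  -- `∃R.⨅_t (χ_t → H_t)` holds throughout `X` but fails at `b`.
  have hX : X ⊆ (ALC.ex R (ALC.iConj fun t => .impl t.1.charConcept (H t))).sem M := fun a ha =>
    let ⟨y, hy, hr⟩ := hup a ha
    ⟨y, hr, (ALC.mem_sem_iConj M _ y).2 fun t =>
      or_iff_not_imp_left.2 fun hχ => hsubY t y hy (not_not.1 hχ)⟩
  obtain ⟨b', hb', hG⟩ := h _ (.ex R (.iConj fun t => .impl (DepthType.isELU_charConcept _) (hH t)))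
    (Nat.succ_le_succ (ALC.depth_iConj_le fun t =>
      max_le (DepthType.depth_charConcept_le _) (hd t))) hX
  exact ((ALC.mem_sem_iConj N _ b').1 hG ⟨_, b', hb', rfl⟩).elim
    (· (N.mem_sem_charConcept_depthType k b')) (hnot _ b' rfl)

theorem leHornDepth.back (h : leHornDepth M N (k + 1) X b) {R : Rol} {b' : D2}
    (hb' : (b, b') ∈ N.rolI R) :
    leHornDepth M N k {a' | (∃ a ∈ X, (a, a') ∈ M.rolI R) ∧ SimL N M k b' a'} b' := by
  intro H hH hd hsub
  have hX : X ⊆ (ALC.all R (.impl (N.depthType k b').charConcept H)).sem M := fun a ha a' hr =>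
    or_iff_not_imp_left.2 fun hχ =>
      hsub ⟨⟨a, ha, hr⟩, simL_of_mem_sem_charConcept_depthType (not_not.1 hχ)⟩
  have hall := h _ (.all R (.impl (DepthType.isELU_charConcept _) hH))
    (Nat.succ_le_succ (max_le (DepthType.depth_charConcept_le _) hd)) hX
  exact (hall b' hb').resolve_left (not_not.2 (N.mem_sem_charConcept_depthType k b'))

theorem hornSimL_of_leHornDepth : ∀ {k : ℕ} {X : Set D1} {b : D2},
    leHornDepth M N k X b → (∀ a ∈ X, SimL N M k b a) → HornSimL M N k X b
  | 0, _, _, h, hsim => ⟨h.nonempty, fun A => h (.atomic A) (.atomic A) le_rfl, hsim⟩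
  | _ + 1, _, _, h, hsim =>
    ⟨⟨h.nonempty, fun A => h (.atomic A) (.atomic A) (Nat.zero_le _), fun a ha => (hsim a ha).1⟩,
      fun _ _ hup =>
        let ⟨b', hb', h'⟩ := h.forth hup
        ⟨_, fun _ hy => hy.1, b', hb', hornSimL_of_leHornDepth h' fun _ hy => hy.2⟩,
      fun _ _ hb' =>
        ⟨_, fun _ ha' => ha'.1, hornSimL_of_leHornDepth (h.back hb') fun _ ha' => ha'.2⟩,
      hsim⟩

theorem leHornDepth_of_leHornCIDepth (h : leHornCIDepth M N k) (b : D2) :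
    leHornDepth M N k {a | SimL N M k b a} b := fun H hH hd hX =>
  h _ H (DepthType.isELU_charConcept _) hH (DepthType.depth_charConcept_le _) hd
    (fun _ ha => hX (simL_of_mem_sem_charConcept_depthType ha))
    (N.mem_sem_charConcept_depthType k b)

theorem globalHornSimL_of_leHornCIDepth (h : leHornCIDepth M N k) : globalHornSimL M N k :=
  fun b => ⟨_, hornSimL_of_leHornDepth (leHornDepth_of_leHornCIDepth h b) fun _ ha => ha⟩

end Completeness

theorem hornALC_ef_game_tbox_general {Con Rol : Type} [Fintype Con] [Fintype Rol]
    {D1 D2 : Type}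
    (M : Str Con Rol D1) (N : Str Con Rol D2) :
    (∀ ℓ : ℕ, leHornCIDepth M N ℓ ↔ globalHornSimL M N ℓ) ∧
    (Finite D1 → Finite D2 → (leHornCI M N ↔ globalHornSim M N)) := by
  have hdepth (ℓ : ℕ) : leHornCIDepth M N ℓ ↔ globalHornSimL M N ℓ :=
    ⟨globalHornSimL_of_leHornCIDepth, leHornCIDepth_of_globalHornSimL⟩
  refine ⟨hdepth, fun _ _ => ?_⟩
  rw [leHornCI_iff_forall_leHornCIDepth, globalHornSim_iff_forall_globalHornSimL]
  exact forall_congr' hdepth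

/-- **TBox-level Ehrenfeucht–Fraïssé characterization for hornALC.**
For any finite vocabulary τ, τ-structures `𝔄` and `𝔅`, and any `ℓ < ω`:
`𝔄 ≤^ℓ_hornALC 𝔅` iff `𝔄 ⪯^ℓ_horn 𝔅`.  If `𝔄` and `𝔅` are finite, then
`𝔄 ≤_hornALC 𝔅` iff `𝔄 ⪯_horn 𝔅`. -/
theorem hornALC_ef_game_tbox {Con Rol : Type} [Fintype Con] [Fintype Rol]
    {D1 D2 : Type} [Nonempty D1] [Nonempty D2]
    (M : Str Con Rol D1) (N : Str Con Rol D2) :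
    (∀ ℓ : ℕ, leHornCIDepth M N ℓ ↔ globalHornSimL M N ℓ) ∧
    (Finite D1 → Finite D2 → (leHornCI M N ↔ globalHornSim M N)) :=
  hornALC_ef_game_tbox_general M N
end

section
/- Let C_∇ be the ALC-concept (∃R.⊤ ⊓ ∀R.A) → B. Then: (a) C_∇ is equivalent to a Horn first-order formula with one free variable (there is a Horn formula φ(x) with a∈C_∇^𝔄 iff 𝔄 ⊨ φ(a) for all τ-structures 𝔄 and a∈dom(𝔄)); and (b) C_∇ is not equivalent to any hornALC-concept, i.e., there is no hornALC-concept H with H^𝔄 = C_∇^𝔄 for all τ-structures 𝔄. -/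
variable {Con Rol D D1 D2 : Type}

/-- First-order formulas over the vocabulary `(Con, Rol)` (with equality), using
natural numbers as variables. -/
inductive FO (Con Rol : Type) where
  | eq : ℕ → ℕ → FO Con Rol
  | catom : Con → ℕ → FO Con Rol
  | ratom : Rol → ℕ → ℕ → FO Con Rol
  | not : FO Con Rol → FO Con Rol
  | and : FO Con Rol → FO Con Rol → FO Con Rol
  | or : FO Con Rol → FO Con Rol → FO Con Rol
  | imp : FO Con Rol → FO Con Rol → FO Con Rol
  | ex : ℕ → FO Con Rol → FO Con Rol
  | all : ℕ → FO Con Rol → FO Con Rol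

/-- Satisfaction of a first-order formula in a structure under a valuation. -/
def FO.sem (M : Str Con Rol D) : FO Con Rol → (ℕ → D) → Prop
  | .eq x y, v => v x = v y
  | .catom A x, v => v x ∈ M.conI A
  | .ratom R x y, v => (v x, v y) ∈ M.rolI R
  | .not φ, v => ¬ φ.sem M v
  | .and φ ψ, v => φ.sem M v ∧ ψ.sem M v
  | .or φ ψ, v => φ.sem M v ∨ ψ.sem M v
  | .imp φ ψ, v => φ.sem M v → ψ.sem M v
  | .ex n φ, v => ∃ d : D, φ.sem M (Function.update v n d)
  | .all n φ, v => ∀ d : D, φ.sem M (Function.update v n d)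

/-- Atomic first-order formulas. -/
inductive FO.IsAtom : FO Con Rol → Prop
  | eq (x y : ℕ) : IsAtom (.eq x y)
  | catom (A : Con) (x : ℕ) : IsAtom (.catom A x)
  | ratom (R : Rol) (x y : ℕ) : IsAtom (.ratom R x y)

/-- Disjunctions of negations of atoms. -/
inductive FO.IsNegClause : FO Con Rol → Prop
  | neg {φ : FO Con Rol} : IsAtom φ → IsNegClause (.not φ)
  | or {φ ψ : FO Con Rol} : IsNegClause φ → IsNegClause ψ → IsNegClause (.or φ ψ)

/-- Basic Horn formulas: disjunctions of formulas at most one of which is an atom,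
the remaining ones being negations of atoms. -/
inductive FO.IsBasicHorn : FO Con Rol → Prop
  | pos {φ : FO Con Rol} : IsAtom φ → IsBasicHorn φ
  | neg {φ : FO Con Rol} : IsNegClause φ → IsBasicHorn φ
  | orL {φ ψ : FO Con Rol} : IsNegClause φ → IsBasicHorn ψ → IsBasicHorn (.or φ ψ)
  | orR {φ ψ : FO Con Rol} : IsBasicHorn φ → IsNegClause ψ → IsBasicHorn (.or φ ψ)

/-- Horn formulas: constructed from basic Horn formulas using ∧, ∃ and ∀. -/
inductive FO.IsHorn : FO Con Rol → Prop
  | basic {φ : FO Con Rol} : IsBasicHorn φ → IsHorn φ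
  | and {φ ψ : FO Con Rol} : IsHorn φ → IsHorn ψ → IsHorn (.and φ ψ)
  | ex (n : ℕ) {φ : FO Con Rol} : IsHorn φ → IsHorn (.ex n φ)
  | all (n : ℕ) {φ : FO Con Rol} : IsHorn φ → IsHorn (.all n φ)

/-- ELU-concepts are preserved under simulations. -/
lemma eluPres {Con Rol D1 D2 : Type} {M : Str Con Rol D1} {N : Str Con Rol D2}
    {S : Set (D1 × D2)} (hS : IsSim M N S) {C : ALC Con Rol} (hC : C.IsELU) :
    ∀ a b, (a, b) ∈ S → a ∈ C.sem M → b ∈ C.sem N := by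
  induction hC with
  | top => intro a b _ _; trivial
  | atomic A => intro a b hab ha; exact (hS a b hab).1 A ha
  | conj h1 h2 ih1 ih2 =>
      intro a b hab ha
      exact ⟨ih1 a b hab ha.1, ih2 a b hab ha.2⟩
  | disj h1 h2 ih1 ih2 =>
      intro a b hab ha
      cases ha with
      | inl h => exact Or.inl (ih1 a b hab h)
      | inr h => exact Or.inr (ih2 a b hab h)
  | ex R hC ih =>
      intro a b hab ha
      obtain ⟨a', haa', ha'⟩ := ha
      obtain ⟨b', hbb', hab'⟩ := (hS a b hab).2 R a' haa'
      exact ⟨b', hbb', ih a' b' hab' ha'⟩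

/-- hornALC-concepts are preserved under Horn simulations. -/
lemma hornPres {Con Rol D1 D2 : Type} {M : Str Con Rol D1} {N : Str Con Rol D2}
    {Z : Set (Set D1 × D2)} (hZ : IsHornSim M N Z) {H : ALC Con Rol} (hH : H.IsHorn) :
    ∀ X b, (X, b) ∈ Z → X ⊆ H.sem M → b ∈ H.sem N := by
  induction hH with
  | bot =>
      intro X b hXb hsub
      obtain ⟨x, hx⟩ := (hZ X b hXb).1
      exact absurd (hsub hx) (by simp [ALC.sem])
  | top => intro X b _ _; trivial
  | atomic A => intro X b hXb hsub; exact (hZ X b hXb).2.1 A hsub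
  | conj _ _ ih1 ih2 =>
      intro X b hXb hsub
      exact ⟨ih1 X b hXb (fun x hx => (hsub hx).1), ih2 X b hXb (fun x hx => (hsub hx).2)⟩
  | @impl L H0 hL _ ih =>
      intro X b hXb hsub
      by_cases hbL : b ∈ L.sem N
      · refine Or.inr (ih X b hXb ?_)
        intro x hx
        obtain ⟨S, hS, hbx⟩ := (hZ X b hXb).2.2.2.2 x hx
        have hxL : x ∈ L.sem M := eluPres hS hL b x hbx hbL
        cases hsub hx with
        | inl h => exact absurd hxL h
        | inr h => exact h
      · exact Or.inl hbL
  | @ex R' H0 _ ih =>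
      intro X b hXb hsub
      have hup : relUp (M.rolI R') X (H0.sem M) := by
        intro x hx
        obtain ⟨y, hy, hyH⟩ := hsub hx
        exact ⟨y, hyH, hy⟩
      obtain ⟨Y', hY'sub, b', hbb', hY'Z⟩ := (hZ X b hXb).2.2.1 R' (H0.sem M) hup
      exact ⟨b', hbb', ih Y' b' hY'Z hY'sub⟩
  | @all R' H0 _ ih =>
      intro X b hXb hsub
      intro b' hbb'
      obtain ⟨Y, hYdown, hYZ⟩ := (hZ X b hXb).2.2.2.1 R' b' hbb'
      refine ih Y b' hYZ ?_
      intro y hy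
      obtain ⟨x, hxX, hxy⟩ := hYdown y hy
      exact hsub hxX y hxy

/-- Let `C_∇ = (∃R.⊤ ⊓ ∀R.A) → B`.  Then (a) `C_∇` is equivalent to a Horn first-order
formula with one free variable, and (b) `C_∇` is not equivalent to any hornALC-concept. -/
theorem Cnabla_horn_but_not_hornALC {Con Rol : Type} (A B : Con) (R : Rol) (hAB : A ≠ B) :
    (∃ φ : FO Con Rol, φ.IsHorn ∧
      ∀ (D : Type) [Nonempty D] (M : Str Con Rol D) (a : D) (v : ℕ → D),
        a ∈ (ALC.impl (.conj (.ex R .top) (.all R (.atomic A))) (.atomic B)).sem M ↔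
          φ.sem M (Function.update v 0 a)) ∧
    ¬ ∃ H : ALC Con Rol, H.IsHorn ∧
      ∀ (D : Type) [Nonempty D] (M : Str Con Rol D),
        H.sem M = (ALC.impl (.conj (.ex R .top) (.all R (.atomic A))) (.atomic B)).sem M := by
  constructor
  · -- part (a): the Horn formula ∀y ∃z ((¬Rxy ∨ Rxz) ∧ (¬Rxy ∨ ¬Az ∨ Bx))
    refine ⟨.all 1 (.ex 2 (.and
        (.or (.not (.ratom R 0 1)) (.ratom R 0 2))
        (.or (.not (.ratom R 0 1)) (.or (.not (.catom A 2)) (.catom B 0))))), ?_, ?_⟩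
    · exact .all 1 (.ex 2 (.and
        (.basic (.orL (.neg (.ratom R 0 1)) (.pos (.ratom R 0 2))))
        (.basic (.orL (.neg (.ratom R 0 1))
          (.orL (.neg (.catom A 2)) (.pos (.catom B 0)))))))
    · intro D _ M a v
      simp only [FO.sem, ALC.sem, Set.mem_union, Set.mem_compl_iff, Set.mem_inter_iff,
        Set.mem_setOf_eq, Function.update]
      norm_num
      constructor
      · intro h d
        by_cases hd : (a, d) ∈ M.rolI R
        · rcases h with hall | hB
          · obtain ⟨e, he, heA⟩ := hall d hd
            exact ⟨e, Or.inr he, Or.inr (Or.inl heA)⟩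
          · exact ⟨d, Or.inr hd, Or.inr (Or.inr hB)⟩
        · exact ⟨d, Or.inl hd, Or.inl hd⟩
      · intro hφ
        by_cases hall : ∀ b, (a, b) ∈ M.rolI R → b ∈ M.conI A
        · rcases em (∃ d, (a, d) ∈ M.rolI R) with ⟨d, hd⟩ | hno
          · obtain ⟨e, h1, h2⟩ := hφ d
            have hae : (a, e) ∈ M.rolI R := h1.resolve_left (not_not_intro hd)
            rcases h2 with h | h | h
            · exact absurd hd h
            · exact absurd (hall e hae) h
            · exact Or.inr h
          · exact Or.inl fun x hx => absurd ⟨x, hx⟩ hno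
        · push_neg at hall
          obtain ⟨e, he, heA⟩ := hall
          exact Or.inl fun x hx => ⟨e, he, heA⟩
  · -- part (b)
    rintro ⟨H, hH, hEq⟩
    classical
    -- counterexample structure on Fin 4: 0 = a₀, 1 = a₁, 2 = a₂, 3 = d
    set M : Str Con Rol (Fin 4) :=
      ⟨fun P => {x | (P = A ∧ x = 3) ∨ (P = B ∧ x = 2)},
       fun R' => {p | R' = R ∧ (p = (1, 0) ∨ p = (1, 3) ∨ p = (2, 3) ∨ p = (0, 3))}⟩ with hM
    have hMrol : ∀ (R' : Rol) (p : Fin 4 × Fin 4), p ∈ M.rolI R' ↔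
        (R' = R ∧ (p = ((1 : Fin 4), (0 : Fin 4)) ∨ p = (1, 3) ∨ p = (2, 3) ∨ p = (0, 3))) :=
      fun _ _ => Iff.rfl
    have hMcon : ∀ (P : Con) (x : Fin 4), x ∈ M.conI P ↔
        ((P = A ∧ x = (3 : Fin 4)) ∨ (P = B ∧ x = 2)) := fun _ _ => Iff.rfl
    -- no element has an R-successor except 0, 1, 2; 3 has none
    have hno3 : ∀ (R' : Rol) (b : Fin 4), ((3 : Fin 4), b) ∉ M.rolI R' := by
      intro R' b hb
      rw [hMrol] at hb
      rcases hb.2 with h | h | h | h <;> rw [Prod.mk.injEq] at h <;>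
        exact absurd h.1 (by decide)
    have h0succ : ∀ (R' : Rol) (b : Fin 4), ((0 : Fin 4), b) ∈ M.rolI R' → R' = R ∧ b = 3 := by
      intro R' b hb
      rw [hMrol] at hb
      obtain ⟨rfl, h⟩ := hb
      refine ⟨rfl, ?_⟩
      rcases h with h | h | h | h <;> rw [Prod.mk.injEq] at h <;>
        first
        | (exact absurd h.1 (by decide))
        | exact h.2
    have h2succ : ∀ (R' : Rol) (b : Fin 4), ((2 : Fin 4), b) ∈ M.rolI R' → R' = R ∧ b = 3 := by
      intro R' b hb
      rw [hMrol] at hb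
      obtain ⟨rfl, h⟩ := hb
      refine ⟨rfl, ?_⟩
      rcases h with h | h | h | h <;> rw [Prod.mk.injEq] at h <;>
        first
        | (exact absurd h.1 (by decide))
        | exact h.2
    have h03 : ((0 : Fin 4), (3 : Fin 4)) ∈ M.rolI R := by
      rw [hMrol]; exact ⟨rfl, by right; right; right; rfl⟩
    have h23 : ((2 : Fin 4), (3 : Fin 4)) ∈ M.rolI R := by
      rw [hMrol]; exact ⟨rfl, by right; right; left; rfl⟩
    have hnot1 : ∀ P : Con, (1 : Fin 4) ∉ M.conI P := by
      intro P hP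
      rw [hMcon] at hP
      rcases hP with ⟨-, h⟩ | ⟨-, h⟩ <;> exact absurd h (by decide)
    have hnot0 : ∀ P : Con, (0 : Fin 4) ∉ M.conI P := by
      intro P hP
      rw [hMcon] at hP
      rcases hP with ⟨-, h⟩ | ⟨-, h⟩ <;> exact absurd h (by decide)
    -- the simulation {(0, t), (3, 3)} works for t = 1 and t = 2
    have hSim : ∀ t : Fin 4, t = 1 ∨ t = 2 → Sim M M 0 t := by
      intro t ht
      refine ⟨{((0 : Fin 4), t), ((3 : Fin 4), (3 : Fin 4))}, ?_, Set.mem_insert _ _⟩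
      intro a b hab
      simp only [Set.mem_insert_iff, Set.mem_singleton_iff, Prod.mk.injEq] at hab
      rcases hab with ⟨rfl, rfl⟩ | ⟨rfl, rfl⟩
      · refine ⟨fun P hP => absurd hP (hnot0 P), ?_⟩
        intro R' a' ha'
        obtain ⟨rfl, rfl⟩ := h0succ R' a' ha'
        refine ⟨3, ?_, by simp⟩
        rw [hMrol]
        rcases ht with rfl | rfl
        · exact ⟨rfl, by right; left; rfl⟩
        · exact ⟨rfl, by right; right; left; rfl⟩
      · exact ⟨fun P hP => hP, fun R' a' ha' => absurd ha' (hno3 R' a')⟩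
    -- the Horn simulation
    set Z : Set (Set (Fin 4) × Fin 4) :=
      {(({1, 2} : Set (Fin 4)), (0 : Fin 4)), (({3} : Set (Fin 4)), (3 : Fin 4))} with hZdef
    have hZ33 : (({3} : Set (Fin 4)), (3 : Fin 4)) ∈ Z := by
      rw [hZdef]; exact Set.mem_insert_iff.mpr (Or.inr rfl)
    have hZ : IsHornSim M M Z := by
      intro X b hXb
      rw [hZdef] at hXb
      simp only [Set.mem_insert_iff, Set.mem_singleton_iff, Prod.mk.injEq] at hXb
      rcases hXb with ⟨rfl, rfl⟩ | ⟨rfl, rfl⟩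
      · refine ⟨⟨1, Set.mem_insert _ _⟩, ?_, ?_, ?_, ?_⟩
        · intro P hP
          exact absurd (hP (Set.mem_insert _ _)) (hnot1 P)
        · intro R' Y hup
          obtain ⟨y, hyY, hy⟩ := hup 2 (by simp)
          obtain ⟨rfl, rfl⟩ := h2succ R' y hy
          refine ⟨{3}, fun z hz => by rw [Set.mem_singleton_iff] at hz; rwa [hz], 3, h03, hZ33⟩
        · intro R' b' hb'
          obtain ⟨rfl, rfl⟩ := h0succ R' b' hb'
          refine ⟨{3}, ?_, hZ33⟩
          intro y hy
          rw [Set.mem_singleton_iff] at hy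
          subst hy
          exact ⟨2, by simp, h23⟩
        · intro a ha
          simp only [Set.mem_insert_iff, Set.mem_singleton_iff] at ha
          exact hSim a ha
      · refine ⟨⟨3, rfl⟩, fun P hP => hP rfl, ?_, ?_, ?_⟩
        · intro R' Y hup
          obtain ⟨y, -, hy⟩ := hup 3 rfl
          exact absurd hy (hno3 R' y)
        · intro R' b' hb'
          exact absurd hb' (hno3 R' b')
        · intro a ha
          rw [Set.mem_singleton_iff] at ha
          subst ha
          refine ⟨{((3 : Fin 4), (3 : Fin 4))}, ?_, rfl⟩
          intro a b hab
          rw [Set.mem_singleton_iff, Prod.mk.injEq] at hab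
          obtain ⟨rfl, rfl⟩ := hab
          exact ⟨fun P hP => hP, fun R' a' ha' => absurd ha' (hno3 R' a')⟩
    have hEqM := hEq (Fin 4) M
    have hCsem : ∀ x : Fin 4,
        x ∈ (ALC.impl (.conj (.ex R .top) (.all R (.atomic A))) (.atomic B)).sem M ↔
        (¬ ((∃ b, (x, b) ∈ M.rolI R ∧ True) ∧ ∀ b, (x, b) ∈ M.rolI R → b ∈ M.conI A) ∨
          x ∈ M.conI B) := fun _ => Iff.rfl
    -- 1 and 2 are in C, hence in H
    have h1 : (1 : Fin 4) ∈ H.sem M := by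
      rw [hEqM, hCsem]
      left
      rintro ⟨-, hall⟩
      have h0A : (0 : Fin 4) ∈ M.conI A := by
        apply hall 0
        rw [hMrol]
        exact ⟨rfl, by left; rfl⟩
      exact hnot0 A h0A
    have h2 : (2 : Fin 4) ∈ H.sem M := by
      rw [hEqM, hCsem, hMcon]
      exact Or.inr (Or.inr ⟨rfl, rfl⟩)
    -- hence 0 ∈ H by Horn preservation, but 0 ∉ C
    have h0 : (0 : Fin 4) ∈ H.sem M := by
      refine hornPres hZ hH {1, 2} 0 (by rw [hZdef]; exact Set.mem_insert _ _) ?_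
      intro x hx
      simp only [Set.mem_insert_iff, Set.mem_singleton_iff] at hx
      rcases hx with rfl | rfl <;> assumption
    rw [hEqM, hCsem] at h0
    rcases h0 with h0 | h0
    · apply h0
      refine ⟨⟨3, h03, trivial⟩, ?_⟩
      intro b hb
      obtain ⟨-, rfl⟩ := h0succ R b hb
      rw [hMcon]
      exact Or.inl ⟨rfl, rfl⟩
    · exact hnot0 B h0
end
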